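/- Let Σ=(X,𝒰,φ) be a forward complete control system. The following statements are equivalent: (i) Σ is strongly input-to-state stable (sISS); (ii) Σ has the strong asymptotic gain (sAG) property and is uniformly globally stable (UGS); (iii) Σ has the strong limit property (sLIM) and is UGS. -/

import Mathlib

/-!
The implications out of sISS are immediate, and sLIM with UGS gives sAG: once a trajectory has
come within `δ + γ ‖u‖` of the origin, UGS restarted there (cocycle property) keeps it within
`σ (δ + γ ‖u‖) + γ ‖u‖` for ever after.

For sAG with UGS ⇒ sISS, take one gain `γ` dominating both gains and let `f x t` be the supremum,
over inputs `u` and times `s ≥ t`, of the excess `max (‖φ(s, x, u)‖ - γ ‖u‖) 0`. By UGS it is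
bounded by `σ ‖x‖`, it is nonincreasing in `t`, and sAG makes it tend to `0`. Its sliding average
`∫ s in t-1..t, f x s` plus `σ ‖x‖ * exp (-t)` is a continuous strictly decreasing majorant of
`f x`, which serves as `β x`.
-/

open Set Filter

/-- Class `K`: continuous, strictly increasing on `[0,∞)` and vanishing at `0`. -/
def ClassK (γ : ℝ → ℝ) : Prop :=
  ContinuousOn γ (Ici 0) ∧ StrictMonoOn γ (Ici 0) ∧ γ 0 = 0

/-- Class `K∞`: class `K` and unbounded. -/
def ClassKinf (γ : ℝ → ℝ) : Prop :=
  ClassK γ ∧ ∀ c : ℝ, ∃ r : ℝ, 0 ≤ r ∧ c ≤ γ r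

/-- The class `K∞ ∪ {0}`. -/
def ClassKinf0 (γ : ℝ → ℝ) : Prop :=
  ClassKinf γ ∨ ∀ r : ℝ, 0 ≤ r → γ r = 0

/-- The class `K ∪ {0}`. -/
def ClassK0 (γ : ℝ → ℝ) : Prop :=
  ClassK γ ∨ ∀ r : ℝ, 0 ≤ r → γ r = 0

/-- Class `L`: continuous, strictly decreasing on `[0,∞)` with limit `0` at infinity. -/
def ClassL (γ : ℝ → ℝ) : Prop :=
  ContinuousOn γ (Ici 0) ∧ StrictAntiOn γ (Ici 0) ∧ Tendsto γ atTop (nhds 0)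

/-- Class `KL`. -/
def ClassKL (β : ℝ → ℝ → ℝ) : Prop :=
  ContinuousOn (fun p : ℝ × ℝ => β p.1 p.2) ((Ici 0) ×ˢ (Ici 0)) ∧
  (∀ t : ℝ, 0 ≤ t → ClassK (fun r => β r t)) ∧
  ∀ r : ℝ, 0 < r → StrictAntiOn (β r) (Ici 0) ∧ Tendsto (β r) atTop (nhds 0)

/-- A forward complete control system `Σ = (X, 𝒰, φ)`: inputs are functions
`u : ℝ₊ → U` (modelled as functions on `ℝ`, with only `t ≥ 0` relevant);
the set `inputs` of admissible inputs carries a norm `Unorm`, is shift invariant and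
closed under concatenation; the transition map `phi` satisfies the identity property,
causality, continuity in time and the cocycle property. -/
structure ControlSystem (X U : Type*) [NormedAddCommGroup X] [NormedSpace ℝ X] [Zero U] where
  /-- the set of admissible input functions -/
  inputs : Set (ℝ → U)
  /-- the norm of the input space -/
  Unorm : (ℝ → U) → ℝ
  Unorm_nonneg : ∀ u, 0 ≤ Unorm u
  /-- the zero input is admissible -/
  zero_mem : (fun _ : ℝ => (0 : U)) ∈ inputs
  Unorm_zero : Unorm (fun _ : ℝ => (0 : U)) = 0
  /-- the transition map `φ(t,x,u)` -/
  phi : ℝ → X → (ℝ → U) → X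
  /-- axiom of shift invariance -/
  shift_mem : ∀ u ∈ inputs, ∀ τ : ℝ, 0 ≤ τ → (fun s => u (s + τ)) ∈ inputs
  shift_norm : ∀ u ∈ inputs, ∀ τ : ℝ, 0 ≤ τ → Unorm (fun s => u (s + τ)) ≤ Unorm u
  /-- axiom of concatenation -/
  concat_mem : ∀ u₁ ∈ inputs, ∀ u₂ ∈ inputs, ∀ t : ℝ, 0 < t →
    (fun s => if s ≤ t then u₁ s else u₂ (s - t)) ∈ inputs
  /-- identity property -/
  identity : ∀ x u, phi 0 x u = x
  /-- causality -/
  causality : ∀ t : ℝ, 0 ≤ t → ∀ x : X, ∀ u ∈ inputs, ∀ v ∈ inputs,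
    (∀ s ∈ Icc (0:ℝ) t, u s = v s) → phi t x u = phi t x v
  /-- continuity of trajectories -/
  cont : ∀ x : X, ∀ u ∈ inputs, ContinuousOn (fun t => phi t x u) (Ici 0)
  /-- cocycle property -/
  cocycle : ∀ t : ℝ, 0 ≤ t → ∀ h : ℝ, 0 ≤ h → ∀ x : X, ∀ u ∈ inputs,
    phi h (phi t x u) (fun s => u (s + t)) = phi (t + h) x u

namespace ControlSystem

variable {X U : Type*} [NormedAddCommGroup X] [NormedSpace ℝ X] [Zero U]

/-- the zero input -/
def zeroIn : ℝ → U := fun _ => 0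

/-- Uniform global stability. -/
def UGS (S : ControlSystem X U) : Prop :=
  ∃ σ γ, ClassKinf σ ∧ ClassKinf0 γ ∧
    ∀ t : ℝ, 0 ≤ t → ∀ x : X, ∀ u ∈ S.inputs,
      ‖S.phi t x u‖ ≤ σ ‖x‖ + γ (S.Unorm u)

/-- Strong asymptotic gain property. -/
def sAG (S : ControlSystem X U) : Prop :=
  ∃ γ, ClassKinf0 γ ∧
    ∀ x : X, ∀ ε : ℝ, 0 < ε → ∃ τ : ℝ, 0 ≤ τ ∧
      ∀ u ∈ S.inputs, ∀ t : ℝ, τ ≤ t →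
        ‖S.phi t x u‖ ≤ ε + γ (S.Unorm u)

/-- Strong limit property. -/
def sLIM (S : ControlSystem X U) : Prop :=
  ∃ γ, ClassK0 γ ∧
    ∀ ε : ℝ, 0 < ε → ∀ x : X, ∃ τ : ℝ, 0 ≤ τ ∧
      ∀ u ∈ S.inputs, ∃ t ∈ Icc (0:ℝ) τ,
        ‖S.phi t x u‖ ≤ ε + γ (S.Unorm u)

/-- Strong input-to-state stability. -/
def sISS (S : ControlSystem X U) : Prop :=
  ∃ (γ σ : ℝ → ℝ) (β : X → ℝ → ℝ), ClassK γ ∧ ClassKinf σ ∧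
    (∀ x : X, x ≠ 0 → ClassL (β x)) ∧
    (∀ x : X, ∀ t : ℝ, 0 ≤ t → 0 ≤ β x t ∧ β x t ≤ σ ‖x‖) ∧
    ∀ x : X, ∀ u ∈ S.inputs, ∀ t : ℝ, 0 ≤ t →
      ‖S.phi t x u‖ ≤ β x t + γ (S.Unorm u)


end ControlSystem

open Topology

section ComparisonFunctions

variable {γ γ₁ γ₂ σ : ℝ → ℝ}

theorem ClassK.classK0 (h : ClassK γ) : ClassK0 γ := Or.inl h

theorem ClassKinf0.classK0 (h : ClassKinf0 γ) : ClassK0 γ := h.imp And.left id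

theorem ClassK.pos (h : ClassK γ) {r : ℝ} (hr : 0 < r) : 0 < γ r :=
  h.2.2 ▸ h.2.1 self_mem_Ici hr.le hr

theorem ClassK.exists_pos_le (h : ClassK γ) {ε : ℝ} (hε : 0 < ε) : ∃ δ > 0, γ δ ≤ ε := by
  have hγ0 : Tendsto γ (𝓝[>] 0) (𝓝 0) := by
    simpa [h.2.2] using
      (h.1 0 self_mem_Ici).tendsto.mono_left (nhdsWithin_mono 0 Ioi_subset_Ici_self)
  obtain ⟨δ, hδ, hγδ⟩ := ((hγ0.eventually (Iic_mem_nhds hε)).and self_mem_nhdsWithin).exists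
  exact ⟨δ, hγδ, hδ⟩

namespace ClassK0

theorem map_zero (h : ClassK0 γ) : γ 0 = 0 :=
  h.elim (·.2.2) (· 0 le_rfl)

theorem monotoneOn (h : ClassK0 γ) : MonotoneOn γ (Ici 0) :=
  h.elim (·.2.1.monotoneOn) fun h a ha b hb _ => by rw [h a ha, h b hb]

theorem continuousOn (h : ClassK0 γ) : ContinuousOn γ (Ici 0) :=
  h.elim (·.1) fun h => continuousOn_const.congr h

theorem nonneg (h : ClassK0 γ) {r : ℝ} (hr : 0 ≤ r) : 0 ≤ γ r := by
  simpa [h.map_zero] using h.monotoneOn self_mem_Ici hr hr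

theorem map_add_le (h : ClassK0 γ) {a b : ℝ} (ha : 0 ≤ a) (hb : 0 ≤ b) :
    γ (a + b) ≤ γ (a + a) + γ (b + b) := by
  have haa := h.nonneg (add_nonneg ha ha)
  have hbb := h.nonneg (add_nonneg hb hb)
  rcases le_total a b with hab | hab
  · have := h.monotoneOn (add_nonneg ha hb) (add_nonneg hb hb) (by linarith : a + b ≤ b + b)
    linarith
  · have := h.monotoneOn (add_nonneg ha hb) (add_nonneg ha ha) (by linarith : a + b ≤ a + a)
    linarith

theorem add (h₁ : ClassK0 γ₁) (h₂ : ClassK0 γ₂) : ClassK0 (fun r => γ₁ r + γ₂ r) := by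
  have hzero : γ₁ 0 + γ₂ 0 = 0 := by simp [h₁.map_zero, h₂.map_zero]
  have hcont := h₁.continuousOn.add h₂.continuousOn
  have hmono₁ := h₁.monotoneOn
  rcases h₁ with hK₁ | h₁0
  · exact Or.inl ⟨hcont, hK₁.2.1.add_monotone h₂.monotoneOn, hzero⟩
  rcases h₂ with hK₂ | h₂0
  · exact Or.inl ⟨hcont, hmono₁.add_strictMono hK₂.2.1, hzero⟩
  · exact Or.inr fun r hr => by simp [h₁0 r hr, h₂0 r hr]

theorem add_id (h : ClassK0 γ) : ClassKinf (fun r => γ r + r) :=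
  ⟨⟨h.continuousOn.add continuousOn_id, h.monotoneOn.add_strictMono (strictMono_id.strictMonoOn _),
      by simp [h.map_zero]⟩,
    fun c => ⟨max c 0, le_max_right c 0,
      le_add_of_nonneg_of_le (h.nonneg (le_max_right c 0)) (le_max_left c 0)⟩⟩

end ClassK0

theorem ClassK.comp_classK0 (hσ : ClassK σ) (hγ : ClassK0 γ) : ClassK0 (fun r => σ (γ r)) := by
  have hmaps : MapsTo γ (Ici 0) (Ici 0) := fun r hr => hγ.nonneg hr
  rcases hγ with hγ | hγ
  · exact Or.inl ⟨hσ.1.comp hγ.1 hmaps, hσ.2.1.comp hγ.2.1 hmaps, by simp [hγ.2.2, hσ.2.2]⟩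
  · exact Or.inr fun r hr => by simp [hγ r hr, hσ.2.2]

end ComparisonFunctions

section SlidingAverage

variable {f : ℝ → ℝ}

namespace Antitone

theorem le_integral_window (hf : Antitone f) (t : ℝ) : f t ≤ ∫ s in (t - 1)..t, f s := by
  simpa using intervalIntegral.integral_mono_on (sub_le_self t zero_le_one) intervalIntegrable_const
    (hf.intervalIntegrable (μ := MeasureTheory.volume)) fun s hs => hf hs.2

theorem integral_window_le (hf : Antitone f) (t : ℝ) : ∫ s in (t - 1)..t, f s ≤ f (t - 1) := by
  simpa using intervalIntegral.integral_mono_on (sub_le_self t zero_le_one)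
    (hf.intervalIntegrable (μ := MeasureTheory.volume)) intervalIntegrable_const fun s hs => hf hs.1

theorem antitone_integral_window (hf : Antitone f) :
    Antitone fun t => ∫ s in (t - 1)..t, f s := by
  have hshift : ∀ t, ∫ s in (t - 1)..t, f s = ∫ s in (-1 : ℝ)..0, f (s + t) := fun t => by
    rw [intervalIntegral.integral_comp_add_right]
    ring_nf
  intro a b hab
  dsimp only
  rw [hshift a, hshift b]
  exact intervalIntegral.integral_mono_on (by norm_num) (hf.comp_monotone
    (monotone_id.add_const b)).intervalIntegrable (hf.comp_monotone
    (monotone_id.add_const a)).intervalIntegrable fun s _ => hf (by linarith)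

theorem continuous_integral_window (hf : Antitone f) :
    Continuous fun t => ∫ s in (t - 1)..t, f s := by
  have hint : ∀ a b, IntervalIntegrable f MeasureTheory.volume a b :=
    fun _ _ => hf.intervalIntegrable
  have hprim := intervalIntegral.continuous_primitive hint 0
  have hsub : ∀ t, ∫ s in (t - 1)..t, f s = (∫ s in 0..t, f s) - ∫ s in 0..(t - 1), f s :=
    fun t => (intervalIntegral.integral_interval_sub_left (hint 0 t) (hint 0 (t - 1))).symm
  simp only [hsub]
  exact hprim.sub (hprim.comp (continuous_id.sub continuous_const))

theorem tendsto_integral_window (hf : Antitone f) (h0 : Tendsto f atTop (𝓝 0)) :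
    Tendsto (fun t => ∫ s in (t - 1)..t, f s) atTop (𝓝 0) :=
  tendsto_of_tendsto_of_tendsto_of_le_of_le h0
    (h0.comp (tendsto_atTop_add_const_right atTop (-1) tendsto_id)) hf.le_integral_window
    hf.integral_window_le

end Antitone

/-- For antitone `f` with `0 ≤ f ≤ M` this is a class-`L` majorant of `f`, bounded by `2 M` on
`[0, ∞)`: the sliding average is continuous and lies above `f`, and `M * exp (-t)` makes the sum
strictly decreasing. -/
noncomputable def slidingMajorant (f : ℝ → ℝ) (M t : ℝ) : ℝ :=
  (∫ s in (t - 1)..t, f s) + M * Real.exp (-t)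

variable {M : ℝ}

theorem Antitone.le_slidingMajorant (hf : Antitone f) (hM : 0 ≤ M) (t : ℝ) :
    f t ≤ slidingMajorant f M t := by
  have := hf.le_integral_window t
  unfold slidingMajorant
  nlinarith [Real.exp_pos (-t)]

theorem Antitone.slidingMajorant_le (hf : Antitone f) (hfM : ∀ t, f t ≤ M) (hM : 0 ≤ M)
    {t : ℝ} (ht : 0 ≤ t) : slidingMajorant f M t ≤ M + M := by
  have hexp : M * Real.exp (-t) ≤ M :=
    mul_le_of_le_one_right hM (Real.exp_le_one_iff.2 (neg_nonpos.2 ht))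
  have := (hf.integral_window_le t).trans (hfM (t - 1))
  unfold slidingMajorant
  linarith

theorem Antitone.classL_slidingMajorant (hf : Antitone f) (hM : 0 < M)
    (h0 : Tendsto f atTop (𝓝 0)) : ClassL (slidingMajorant f M) := by
  have hexp : StrictAnti fun t => M * Real.exp (-t) := fun a b hab =>
    mul_lt_mul_of_pos_left (Real.exp_lt_exp.2 (neg_lt_neg hab)) hM
  refine ⟨(hf.continuous_integral_window.add
    (continuous_const.mul (Real.continuous_exp.comp continuous_neg))).continuousOn,
    (hf.antitone_integral_window.add_strictAnti hexp).strictAntiOn _, ?_⟩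
  unfold slidingMajorant
  simpa using (hf.tendsto_integral_window h0).add
    (Real.tendsto_exp_neg_atTop_nhds_zero.const_mul M)

end SlidingAverage

namespace ControlSystem

variable {X U : Type*} [NormedAddCommGroup X] [NormedSpace ℝ X] [Zero U]
variable {S : ControlSystem X U} {σ γ γ' : ℝ → ℝ} {x : X}

def UGSBound (S : ControlSystem X U) (σ γ : ℝ → ℝ) : Prop :=
  ∀ t : ℝ, 0 ≤ t → ∀ x : X, ∀ u ∈ S.inputs, ‖S.phi t x u‖ ≤ σ ‖x‖ + γ (S.Unorm u)

def AGBound (S : ControlSystem X U) (γ : ℝ → ℝ) : Prop :=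
  ∀ x : X, ∀ ε : ℝ, 0 < ε → ∃ τ : ℝ, 0 ≤ τ ∧
    ∀ u ∈ S.inputs, ∀ t : ℝ, τ ≤ t → ‖S.phi t x u‖ ≤ ε + γ (S.Unorm u)

theorem UGSBound.mono_gain (hb : S.UGSBound σ γ) (hγ : ∀ r, 0 ≤ r → γ r ≤ γ' r) :
    S.UGSBound σ γ' := fun t ht x u hu =>
  (hb t ht x u hu).trans (add_le_add_right (hγ _ (S.Unorm_nonneg u)) _)

theorem AGBound.mono_gain (hb : S.AGBound γ) (hγ : ∀ r, 0 ≤ r → γ r ≤ γ' r) :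
    S.AGBound γ' := fun x ε hε =>
  let ⟨τ, hτ, hbound⟩ := hb x ε hε
  ⟨τ, hτ, fun u hu t ht => (hbound u hu t ht).trans (add_le_add_right (hγ _ (S.Unorm_nonneg u)) _)⟩

theorem UGSBound.norm_phi_le_of_le (hb : S.UGSBound σ γ) (hγ : MonotoneOn γ (Ici 0))
    {u : ℝ → U} (hu : u ∈ S.inputs) {s t : ℝ} (hs : 0 ≤ s) (hst : s ≤ t) :
    ‖S.phi t x u‖ ≤ σ ‖S.phi s x u‖ + γ (S.Unorm u) := by
  have hts : 0 ≤ t - s := sub_nonneg.2 hst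
  calc ‖S.phi t x u‖ = ‖S.phi (t - s) (S.phi s x u) (fun r => u (r + s))‖ := by
        rw [S.cocycle s hs _ hts x u hu, add_sub_cancel]
    _ ≤ σ ‖S.phi s x u‖ + γ (S.Unorm fun r => u (r + s)) :=
        hb _ hts _ _ (S.shift_mem u hu s hs)
    _ ≤ σ ‖S.phi s x u‖ + γ (S.Unorm u) := by
        gcongr
        exact hγ (S.Unorm_nonneg _) (S.Unorm_nonneg _) (S.shift_norm u hu s hs)

section Envelope

/-- Times are clamped at `0` so that the envelope, hence its sliding average over `[t - 1, t]`,
is defined for every real `t`. -/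
def excessSet (S : ControlSystem X U) (γ : ℝ → ℝ) (x : X) (t : ℝ) : Set ℝ :=
  (fun p : (ℝ → U) × ℝ => max (‖S.phi p.2 x p.1‖ - γ (S.Unorm p.1)) 0) ''
    (S.inputs ×ˢ Ici (max t 0))

noncomputable def envelope (S : ControlSystem X U) (γ : ℝ → ℝ) (x : X) (t : ℝ) : ℝ :=
  sSup (S.excessSet γ x t)

theorem excessSet_nonempty (t : ℝ) : (S.excessSet γ x t).Nonempty :=
  ⟨_, mem_image_of_mem _ (mk_mem_prod S.zero_mem self_mem_Ici)⟩

theorem excessSet_anti {s t : ℝ} (hst : s ≤ t) : S.excessSet γ x t ⊆ S.excessSet γ x s :=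
  image_mono (prod_mono subset_rfl (Ici_subset_Ici.2 (max_le_max_right 0 hst)))

theorem UGSBound.excessSet_le (hb : S.UGSBound σ γ) (hσ : 0 ≤ σ ‖x‖) (t : ℝ) :
    ∀ r ∈ S.excessSet γ x t, r ≤ σ ‖x‖ := by
  rintro _ ⟨⟨u, s⟩, ⟨hu, hs⟩, rfl⟩
  have := hb s ((le_max_right t 0).trans hs) x u hu
  exact max_le (by linarith) hσ

theorem UGSBound.bddAbove_excessSet (hb : S.UGSBound σ γ) (hσ : 0 ≤ σ ‖x‖) (t : ℝ) :
    BddAbove (S.excessSet γ x t) :=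
  ⟨σ ‖x‖, hb.excessSet_le hσ t⟩

theorem UGSBound.envelope_le (hb : S.UGSBound σ γ) (hσ : 0 ≤ σ ‖x‖) (t : ℝ) :
    S.envelope γ x t ≤ σ ‖x‖ :=
  csSup_le (excessSet_nonempty t) (hb.excessSet_le hσ t)

theorem UGSBound.sub_le_envelope (hb : S.UGSBound σ γ) (hσ : 0 ≤ σ ‖x‖) {u : ℝ → U}
    (hu : u ∈ S.inputs) {t : ℝ} (ht : 0 ≤ t) :
    ‖S.phi t x u‖ - γ (S.Unorm u) ≤ S.envelope γ x t :=
  (le_max_left _ 0).trans <| le_csSup (hb.bddAbove_excessSet hσ t) <|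
    mem_image_of_mem _ (mk_mem_prod hu (max_le le_rfl ht))

theorem UGSBound.envelope_nonneg (hb : S.UGSBound σ γ) (hσ : 0 ≤ σ ‖x‖) (t : ℝ) :
    0 ≤ S.envelope γ x t :=
  (le_max_right _ 0).trans <| le_csSup (hb.bddAbove_excessSet hσ t) <|
    mem_image_of_mem _ (mk_mem_prod S.zero_mem self_mem_Ici)

theorem UGSBound.antitone_envelope (hb : S.UGSBound σ γ) (hσ : 0 ≤ σ ‖x‖) :
    Antitone (S.envelope γ x) := fun _ t hst =>
  csSup_le_csSup (hb.bddAbove_excessSet hσ _) (excessSet_nonempty t) (excessSet_anti hst)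

theorem UGSBound.tendsto_envelope (hb : S.UGSBound σ γ) (hσ : 0 ≤ σ ‖x‖) (hAG : S.AGBound γ) :
    Tendsto (S.envelope γ x) atTop (𝓝 0) := by
  refine tendsto_order.2 ⟨fun a ha => Eventually.of_forall fun t =>
    ha.trans_le (hb.envelope_nonneg hσ t), fun a ha => ?_⟩
  obtain ⟨τ, -, hτ⟩ := hAG x (a / 2) (half_pos ha)
  filter_upwards [eventually_ge_atTop τ] with t ht
  refine (csSup_le (excessSet_nonempty t) ?_).trans_lt (half_lt_self ha)
  rintro _ ⟨⟨u, s⟩, ⟨hu, hs⟩, rfl⟩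
  have := hτ u hu s (ht.trans ((le_max_left t 0).trans hs))
  exact max_le (by linarith) (half_pos ha).le

end Envelope

theorem UGS_of_sISS (h : S.sISS) : S.UGS := by
  obtain ⟨γ, σ, β, hγ, hσ, -, hβ, hbound⟩ := h
  refine ⟨σ, fun r => γ r + r, hσ, Or.inl hγ.classK0.add_id, fun t ht x u hu => ?_⟩
  linarith [hbound x u hu t ht, (hβ x t ht).2, S.Unorm_nonneg u]

theorem sAG_of_sISS (h : S.sISS) : S.sAG := by
  obtain ⟨γ, σ, β, hγ, hσ, hβL, hβ, hbound⟩ := h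
  refine ⟨fun r => γ r + r, Or.inl hγ.classK0.add_id, fun x ε hε => ?_⟩
  obtain ⟨τ, hτ, hβτ⟩ : ∃ τ : ℝ, 0 ≤ τ ∧ ∀ t, τ ≤ t → β x t ≤ ε := by
    by_cases hx : x = 0
    · subst hx
      refine ⟨0, le_rfl, fun t ht => ?_⟩
      have := (hβ 0 t ht).2
      rw [norm_zero, hσ.1.2.2] at this
      linarith
    · obtain ⟨τ, hτ⟩ := eventually_atTop.1 ((hβL x hx).2.2.eventually (Iic_mem_nhds hε))
      exact ⟨max τ 0, le_max_right τ 0, fun t ht => hτ t ((le_max_left τ 0).trans ht)⟩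
  refine ⟨τ, hτ, fun u hu t ht => ?_⟩
  linarith [hbound x u hu t (hτ.trans ht), hβτ t ht, S.Unorm_nonneg u]

theorem sLIM_of_sAG (h : S.sAG) : S.sLIM := by
  obtain ⟨γ, hγ, hAG⟩ := h
  refine ⟨γ, hγ.classK0, fun ε hε x => ?_⟩
  obtain ⟨τ, hτ, hbound⟩ := hAG x ε hε
  exact ⟨τ, hτ, fun u hu => ⟨τ, ⟨hτ, le_rfl⟩, hbound u hu τ le_rfl⟩⟩

theorem sAG_of_sLIM_of_UGS (hL : S.sLIM) (hU : S.UGS) : S.sAG := by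
  obtain ⟨γL, hγL, hLIM⟩ := hL
  obtain ⟨σ, γU, hσ, hγU, hUGS⟩ := hU
  refine ⟨fun r => σ (γL r + γL r) + γU r + r,
    Or.inl ((hσ.1.comp_classK0 (hγL.add hγL)).add hγU.classK0).add_id, fun x ε hε => ?_⟩
  obtain ⟨δ, hδ, hσδ⟩ := hσ.1.exists_pos_le hε
  obtain ⟨τ, hτ, hreach⟩ := hLIM (δ / 2) (half_pos hδ) x
  refine ⟨τ, hτ, fun u hu t ht => ?_⟩
  obtain ⟨s, ⟨hs, hsτ⟩, hφs⟩ := hreach u hu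
  have hγLu := hγL.nonneg (S.Unorm_nonneg u)
  have hσφs : σ ‖S.phi s x u‖ ≤ σ (δ / 2 + γL (S.Unorm u)) :=
    hσ.1.classK0.monotoneOn (norm_nonneg _) (add_nonneg (half_pos hδ).le hγLu) hφs
  have hσsplit := hσ.1.classK0.map_add_le (half_pos hδ).le hγLu
  rw [add_halves] at hσsplit
  linarith [UGSBound.norm_phi_le_of_le (x := x) hUGS hγU.classK0.monotoneOn hu hs
    (hsτ.trans ht), S.Unorm_nonneg u]

theorem sISS_of_sAG_of_UGS (hA : S.sAG) (hU : S.UGS) : S.sISS := by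
  obtain ⟨γA, hγA, hAG⟩ := hA
  obtain ⟨σ, γU, hσ, hγU, hUGS⟩ := hU
  set γ : ℝ → ℝ := fun r => γA r + γU r + r
  have hb : S.UGSBound σ γ := UGSBound.mono_gain hUGS fun r hr => by
    linarith [hγA.classK0.nonneg hr]
  have hAG' : S.AGBound γ := AGBound.mono_gain hAG fun r hr => by
    linarith [hγU.classK0.nonneg hr]
  have hσx : ∀ x : X, 0 ≤ σ ‖x‖ := fun x => hσ.1.classK0.nonneg (norm_nonneg x)
  refine ⟨γ, fun r => σ r + σ r + r, fun x => slidingMajorant (S.envelope γ x) (σ ‖x‖),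
    ((hγA.classK0.add hγU.classK0).add_id).1, (hσ.1.classK0.add hσ.1.classK0).add_id,
    fun x hx => ?_, fun x t ht => ⟨?_, ?_⟩, fun x u hu t ht => ?_⟩
  · exact (hb.antitone_envelope (hσx x)).classL_slidingMajorant
      (hσ.1.pos (norm_pos_iff.2 hx)) (hb.tendsto_envelope (hσx x) hAG')
  · exact (hb.envelope_nonneg (hσx x) t).trans
      ((hb.antitone_envelope (hσx x)).le_slidingMajorant (hσx x) t)
  · linarith [(hb.antitone_envelope (hσx x)).slidingMajorant_le (hb.envelope_le (hσx x))
      (hσx x) ht, norm_nonneg x]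
  · linarith [hb.sub_le_envelope (hσx x) hu ht,
      (hb.antitone_envelope (hσx x)).le_slidingMajorant (hσx x) t]

/-- **Characterization of strong ISS**: sISS ⇔ sAG ∧ UGS ⇔ sLIM ∧ UGS. -/
theorem sISS_characterization (S : ControlSystem X U) :
    (S.sISS ↔ S.sAG ∧ S.UGS) ∧ (S.sISS ↔ S.sLIM ∧ S.UGS) :=
  ⟨⟨fun h => ⟨sAG_of_sISS h, UGS_of_sISS h⟩, fun ⟨hA, hU⟩ => sISS_of_sAG_of_UGS hA hU⟩,
    ⟨fun h => ⟨sLIM_of_sAG (sAG_of_sISS h), UGS_of_sISS h⟩,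
      fun ⟨hL, hU⟩ => sISS_of_sAG_of_UGS (sAG_of_sLIM_of_UGS hL hU) hU⟩⟩

end ControlSystem
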